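/- Let α > 1 be real. Define the generalised Laguerre polynomials L_n^{(α)}(x) = Σ_{k=0}^{n} (−1)^k · Γ(n+α+1) / (Γ(k+α+1) (n−k)! k!) · x^k, and the Laguerre W-system functions φₙ(x) = √(n!/Γ(n+1+α)) · x^{α/2} e^{−x/2} L_n^{(α)}(x) for x > 0, n ∈ ℤ₊. Set 𝔞_m = √(m!/Γ(m+1+α)) and 𝔟_n = √(Γ(n+1+α)/n!). Then for all m, n ∈ ℤ₊ the integral D_{m,n} = ∫_0^∞ φₘ′(x) φₙ(x) dx converges and D_{m,n} = −(1/2) 𝔞_m 𝔟_n if m ≥ n+1, D_{m,n} = 0 if m = n, and D_{m,n} = (1/2) 𝔞_n 𝔟_m if m ≤ n−1. -/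

import Mathlib

/-!
Writing `φₙ = 𝔞ₙ Σₖ cₖ x^{α/2+k} e^{-x/2}`, each entry `D_{m,n}` is a finite combination of
`∫₀^∞ (x^β e^{-x/2})' x^γ e^{-x/2} dx = (β - γ)/2 · Γ(β + γ)`, hence
`D_{m,n} = ½ 𝔞ₘ 𝔞ₙ Σ_{k,l} cₖ⁽ᵐ⁾ c_l⁽ⁿ⁾ (k - l) Γ(α + k + l)`, which is antisymmetric in `(m, n)`.
For `n < m`, the identity `(k - l) Γ(α+l+k) = Γ(α+l+1+k) - (α+2l) Γ(α+l+k)` turns the inner sum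
over `k` into Gamma moments `Σₖ cₖ⁽ᵐ⁾ Γ(s+k) = (α+1-s)ₘ Γ(s) / m!` of `L_m^{(α)}`; these vanish at
`s = α+1, …, α+m` (orthogonality), so only the term `l = 0` survives. The moment formula is the
`m`-th forward difference of `k ↦ Γ(s+k) / Γ(α+1+k)`.
-/

open MeasureTheory

/-- The generalised Laguerre polynomial
`L_n^{(α)}(x) = Σ_{k=0}^{n} (−1)^k Γ(n+α+1)/(Γ(k+α+1)(n−k)!k!) x^k` (as a function). -/
noncomputable def genLaguerre (α : ℝ) (n : ℕ) (x : ℝ) : ℝ :=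
  ∑ k ∈ Finset.range (n + 1),
    (-1 : ℝ) ^ k * Real.Gamma ((n : ℝ) + α + 1) /
      (Real.Gamma ((k : ℝ) + α + 1) * (n - k).factorial * k.factorial) * x ^ k

/-- The Laguerre W-system function `φₙ(x) = √(n!/Γ(n+1+α)) x^{α/2} e^{−x/2} L_n^{(α)}(x)`. -/
noncomputable def laguerreW (α : ℝ) (n : ℕ) (x : ℝ) : ℝ :=
  Real.sqrt ((n.factorial : ℝ) / Real.Gamma ((n : ℝ) + 1 + α)) *
    Real.rpow x (α / 2) * Real.exp (-x / 2) * genLaguerre α n x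

open Finset Polynomial fwdDiff

lemma fwdDiff_Gamma_div_Gamma {a b : ℝ} (ha : 0 < a) (hb : 0 < b) :
    Δ_[1] (fun k : ℕ => Real.Gamma (a + k) / Real.Gamma (b + k)) =
      (a - b) • fun k : ℕ => Real.Gamma (a + k) / Real.Gamma (b + 1 + k) := by
  funext k
  have hak : a + k ≠ 0 := by positivity
  have hbk : b + k ≠ 0 := by positivity
  have hGb : Real.Gamma (b + k) ≠ 0 := (Real.Gamma_pos_of_pos (by positivity)).ne'
  simp only [fwdDiff, Pi.smul_apply, smul_eq_mul, Nat.cast_add, Nat.cast_one]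
  rw [← add_assoc, ← add_assoc, add_right_comm b 1, Real.Gamma_add_one hak, Real.Gamma_add_one hbk]
  field_simp
  ring

lemma fwdDiff_iter_Gamma_div_Gamma {a b : ℝ} (ha : 0 < a) (hb : 0 < b) (n : ℕ) :
    (fwdDiff 1)^[n] (fun k : ℕ => Real.Gamma (a + k) / Real.Gamma (b + k)) =
      (descPochhammer ℝ n).eval (a - b) •
        fun k : ℕ => Real.Gamma (a + k) / Real.Gamma (b + n + k) := by
  induction n generalizing b with
  | zero => simp
  | succ n ih =>
    rw [Function.iterate_succ_apply, fwdDiff_Gamma_div_Gamma ha hb, fwdDiff_iter_const_smul,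
      ih (by linarith), smul_smul, descPochhammer_succ_left, eval_mul, eval_comp, eval_sub, eval_X,
      eval_one]
    congr 1
    · rw [sub_add_eq_sub_sub]
    · ext k
      push_cast
      ring_nf

lemma alternating_sum_choose_mul_Gamma_div_Gamma {a b : ℝ} (ha : 0 < a) (hb : 0 < b) (n : ℕ) :
    ∑ k ∈ range (n + 1), (-1) ^ k * (n.choose k : ℝ) * (Real.Gamma (a + k) / Real.Gamma (b + k)) =
      (ascPochhammer ℝ n).eval (b - a) * Real.Gamma a / Real.Gamma (b + n) := by
  have h := congrFun (fwdDiff_iter_Gamma_div_Gamma ha hb n) 0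
  simp only [fwdDiff_iter_eq_sum_shift, zsmul_eq_mul, Pi.smul_apply, smul_eq_mul, mul_one,
    zero_add, CharP.cast_eq_zero, add_zero] at h
  push_cast at h
  have hsign : ∀ k ∈ range (n + 1), (-1 : ℝ) ^ k = (-1) ^ n * (-1) ^ (n - k) := fun k hk => by
    rw [← pow_add, show n + (n - k) = k + 2 * (n - k) by grind, pow_add, pow_mul]
    simp
  rw [← neg_sub, ascPochhammer_eval_neg_eq_descPochhammer, mul_assoc, mul_div_assoc,
    mul_div_assoc, ← h, mul_sum]
  refine sum_congr rfl fun k hk => ?_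
  rw [hsign k hk]
  ring

noncomputable def genLaguerreCoeff (α : ℝ) (n k : ℕ) : ℝ :=
  (-1 : ℝ) ^ k * Real.Gamma ((n : ℝ) + α + 1) /
    (Real.Gamma ((k : ℝ) + α + 1) * (n - k).factorial * k.factorial)

lemma genLaguerre_eq_sum (α : ℝ) (n : ℕ) (x : ℝ) :
    genLaguerre α n x = ∑ k ∈ range (n + 1), genLaguerreCoeff α n k * x ^ k := rfl

lemma genLaguerreCoeff_eq_choose (α : ℝ) {n k : ℕ} (hk : k ≤ n) :
    genLaguerreCoeff α n k = Real.Gamma ((n : ℝ) + α + 1) / n.factorial *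
      ((-1) ^ k * (n.choose k) / Real.Gamma ((k : ℝ) + α + 1)) := by
  have hfact : (n.factorial : ℝ) = n.choose k * k.factorial * (n - k).factorial := by
    exact_mod_cast (Nat.choose_mul_factorial_mul_factorial hk).symm
  have hchoose : (n.choose k : ℝ) ≠ 0 := by exact_mod_cast (Nat.choose_pos hk).ne'
  rw [genLaguerreCoeff, hfact]
  field_simp

lemma genLaguerreCoeff_zero (α : ℝ) (n : ℕ) :
    genLaguerreCoeff α n 0 = Real.Gamma ((n : ℝ) + α + 1) / (Real.Gamma (α + 1) * n.factorial) := by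
  simp [genLaguerreCoeff]

/-- Coefficientwise form of `∫₀^∞ x^{s-1} e^{-x} L_n^{(α)}(x) dx = Γ(s) (α+1-s)_n / n!`. -/
lemma sum_genLaguerreCoeff_mul_Gamma {α s : ℝ} (hα : -1 < α) (hs : 0 < s) (n : ℕ) :
    ∑ k ∈ range (n + 1), genLaguerreCoeff α n k * Real.Gamma (s + k) =
      (ascPochhammer ℝ n).eval (α + 1 - s) * Real.Gamma s / n.factorial := by
  have hα1 : 0 < α + 1 := by linarith
  have hterm : ∀ k ∈ range (n + 1), genLaguerreCoeff α n k * Real.Gamma (s + k) =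
      Real.Gamma ((n : ℝ) + α + 1) / n.factorial *
        ((-1) ^ k * (n.choose k) * (Real.Gamma (s + k) / Real.Gamma (α + 1 + k))) := fun k hk => by
    rw [genLaguerreCoeff_eq_choose α (Nat.lt_succ_iff.mp (mem_range.mp hk)),
      show (k : ℝ) + α + 1 = α + 1 + k by ring]
    ring
  have hG : Real.Gamma (α + 1 + n) ≠ 0 := (Real.Gamma_pos_of_pos (by positivity)).ne'
  rw [sum_congr rfl hterm, ← mul_sum, alternating_sum_choose_mul_Gamma_div_Gamma hs hα1,
    show (n : ℝ) + α + 1 = α + 1 + n by ring]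
  field_simp

lemma sum_genLaguerreCoeff_mul_sub_mul_Gamma {α : ℝ} (hα : 0 < α) {m l : ℕ} (hl : l < m) :
    ∑ k ∈ range (m + 1), genLaguerreCoeff α m k * ((k : ℝ) - l) * Real.Gamma (α + l + k) =
      if l = 0 then -Real.Gamma (α + 1) else 0 := by
  have hshift : ∀ k : ℕ, ((k : ℝ) - l) * Real.Gamma (α + l + k) =
      Real.Gamma (α + l + 1 + k) - (α + 2 * l) * Real.Gamma (α + l + k) := fun k => by
    rw [add_right_comm _ 1, Real.Gamma_add_one (by positivity)]
    ring
  have hα' : -1 < α := by linarith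
  calc ∑ k ∈ range (m + 1), genLaguerreCoeff α m k * ((k : ℝ) - l) * Real.Gamma (α + l + k)
      = ∑ k ∈ range (m + 1), genLaguerreCoeff α m k * Real.Gamma (α + l + 1 + k) -
          (α + 2 * l) * ∑ k ∈ range (m + 1), genLaguerreCoeff α m k * Real.Gamma (α + l + k) := by
        rw [mul_sum, ← sum_sub_distrib]
        refine sum_congr rfl fun k _ => ?_
        rw [mul_assoc, hshift]
        ring
    _ = -((α + 2 * l) *
          ((ascPochhammer ℝ m).eval (1 - (l : ℝ)) * Real.Gamma (α + l) / m.factorial)) := by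
        rw [sum_genLaguerreCoeff_mul_Gamma hα' (by positivity),
          sum_genLaguerreCoeff_mul_Gamma hα' (by positivity),
          show α + 1 - (α + l + 1) = -(l : ℝ) by ring, ascPochhammer_eval_neg_coe_nat_of_lt hl,
          show α + 1 - (α + l) = 1 - l by ring]
        ring
    _ = if l = 0 then -Real.Gamma (α + 1) else 0 := by
        rcases l with _ | l
        · have hfact : (m.factorial : ℝ) ≠ 0 := by positivity
          simp [Real.Gamma_add_one hα.ne', hfact]
        · rw [if_neg l.succ_ne_zero, Nat.cast_succ, sub_add_cancel_right,
            ascPochhammer_eval_neg_coe_nat_of_lt (by omega)]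
          simp

noncomputable def genLaguerreSkewMoment (α : ℝ) (m n : ℕ) : ℝ :=
  ∑ k ∈ range (m + 1), ∑ l ∈ range (n + 1),
    genLaguerreCoeff α m k * genLaguerreCoeff α n l * ((k : ℝ) - l) * Real.Gamma (α + k + l)

lemma genLaguerreSkewMoment_swap (α : ℝ) (m n : ℕ) :
    genLaguerreSkewMoment α n m = -genLaguerreSkewMoment α m n := by
  rw [genLaguerreSkewMoment, genLaguerreSkewMoment, sum_comm, ← sum_neg_distrib]
  refine sum_congr rfl fun k _ => ?_
  rw [← sum_neg_distrib]
  refine sum_congr rfl fun l _ => ?_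
  rw [add_right_comm]
  ring

lemma genLaguerreSkewMoment_self (α : ℝ) (n : ℕ) : genLaguerreSkewMoment α n n = 0 := by
  linarith [genLaguerreSkewMoment_swap α n n]

lemma genLaguerreSkewMoment_of_lt {α : ℝ} (hα : 0 < α) {m n : ℕ} (h : n < m) :
    genLaguerreSkewMoment α m n = -(Real.Gamma ((n : ℝ) + 1 + α) / n.factorial) := by
  have hinner : ∀ l ∈ range (n + 1), ∑ k ∈ range (m + 1),
      genLaguerreCoeff α m k * genLaguerreCoeff α n l * ((k : ℝ) - l) * Real.Gamma (α + k + l) =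
        genLaguerreCoeff α n l * if l = 0 then -Real.Gamma (α + 1) else 0 := fun l hl => by
    rw [← sum_genLaguerreCoeff_mul_sub_mul_Gamma hα (show l < m by grind), mul_sum]
    refine sum_congr rfl fun k _ => ?_
    rw [add_right_comm]
    ring
  rw [genLaguerreSkewMoment, sum_comm, sum_congr rfl hinner,
    sum_eq_single_of_mem 0 (by simp) fun l _ hl => by simp [hl], if_pos rfl, genLaguerreCoeff_zero,
    show (n : ℝ) + α + 1 = n + 1 + α by ring]
  have hG : Real.Gamma (α + 1) ≠ 0 := (Real.Gamma_pos_of_pos (by positivity)).ne'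
  field_simp

noncomputable def rpowExpHalf (β x : ℝ) : ℝ := x ^ β * Real.exp (-x / 2)

lemma hasDerivAt_rpowExpHalf (β : ℝ) {x : ℝ} (hx : x ≠ 0) :
    HasDerivAt (rpowExpHalf β) (β * x ^ (β - 1) * Real.exp (-x / 2) - rpowExpHalf β x / 2) x := by
  have hexp : HasDerivAt (fun y : ℝ => Real.exp (-y / 2)) (Real.exp (-x / 2) * (-1 / 2)) x :=
    ((hasDerivAt_neg x).div_const 2).exp
  refine ((Real.hasDerivAt_rpow_const (p := β) (Or.inl hx)).fun_mul hexp).congr_deriv ?_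
  rw [rpowExpHalf]
  ring

lemma deriv_rpowExpHalf_mul_rpowExpHalf (β γ : ℝ) {x : ℝ} (hx : 0 < x) :
    deriv (rpowExpHalf β) x * rpowExpHalf γ x =
      β * (Real.exp (-x) * x ^ (β + γ - 1)) - Real.exp (-x) * x ^ (β + γ + 1 - 1) / 2 := by
  have hexp : Real.exp (-x / 2) * Real.exp (-x / 2) = Real.exp (-x) := by
    rw [← Real.exp_add]
    ring_nf
  rw [(hasDerivAt_rpowExpHalf β hx.ne').deriv, rpowExpHalf, rpowExpHalf, add_sub_cancel_right,
    show β + γ - 1 = β - 1 + γ by ring, Real.rpow_add hx, Real.rpow_add hx, ← hexp]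
  ring

lemma integrableOn_deriv_rpowExpHalf_mul_rpowExpHalf {β γ : ℝ} (h : 0 < β + γ) :
    IntegrableOn (fun x => deriv (rpowExpHalf β) x * rpowExpHalf γ x) (Set.Ioi 0) := by
  refine IntegrableOn.congr_fun ?_
    (fun x hx => (deriv_rpowExpHalf_mul_rpowExpHalf β γ hx).symm) measurableSet_Ioi
  exact ((Real.GammaIntegral_convergent h).const_mul β).sub
    ((Real.GammaIntegral_convergent (by linarith)).div_const 2)

lemma integral_deriv_rpowExpHalf_mul_rpowExpHalf {β γ : ℝ} (h : 0 < β + γ) :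
    ∫ x in Set.Ioi 0, deriv (rpowExpHalf β) x * rpowExpHalf γ x =
      (β - γ) / 2 * Real.Gamma (β + γ) := by
  have h1 : 0 < β + γ + 1 := by linarith
  rw [setIntegral_congr_fun measurableSet_Ioi
      (fun x hx => deriv_rpowExpHalf_mul_rpowExpHalf β γ hx),
    integral_sub ((Real.GammaIntegral_convergent h).const_mul β)
      ((Real.GammaIntegral_convergent h1).div_const 2),
    integral_const_mul, integral_div, ← Real.Gamma_eq_integral h, ← Real.Gamma_eq_integral h1,
    Real.Gamma_add_one h.ne']
  ring

noncomputable def laguerreWConst (α : ℝ) (n : ℕ) : ℝ :=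
  Real.sqrt ((n.factorial : ℝ) / Real.Gamma ((n : ℝ) + 1 + α))

lemma laguerreW_eqOn_sum (α : ℝ) (n : ℕ) :
    Set.EqOn (laguerreW α n) (fun x => laguerreWConst α n *
      ∑ k ∈ range (n + 1), genLaguerreCoeff α n k * rpowExpHalf (α / 2 + k) x) (Set.Ioi 0) := by
  intro x hx
  simp only [laguerreW, laguerreWConst, genLaguerre_eq_sum, rpowExpHalf, Real.rpow_eq_pow,
    Real.rpow_add_natCast (ne_of_gt hx), mul_sum]
  refine sum_congr rfl fun k _ => ?_
  ring

lemma deriv_laguerreW {α : ℝ} (n : ℕ) {x : ℝ} (hx : 0 < x) :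
    deriv (laguerreW α n) x = laguerreWConst α n *
      ∑ k ∈ range (n + 1), genLaguerreCoeff α n k * deriv (rpowExpHalf (α / 2 + k)) x := by
  have hsum : HasDerivAt (fun x => laguerreWConst α n *
      ∑ k ∈ range (n + 1), genLaguerreCoeff α n k * rpowExpHalf (α / 2 + k) x)
      (laguerreWConst α n * ∑ k ∈ range (n + 1),
        genLaguerreCoeff α n k * deriv (rpowExpHalf (α / 2 + k)) x) x :=
    (HasDerivAt.fun_sum fun k _ =>
      ((hasDerivAt_rpowExpHalf _ hx.ne').differentiableAt.hasDerivAt.const_mul _)).const_mul _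
  exact (hsum.congr_of_eventuallyEq
    ((laguerreW_eqOn_sum α n).eventuallyEq_of_mem (Ioi_mem_nhds hx))).deriv

lemma deriv_laguerreW_mul_laguerreW_eqOn (α : ℝ) (m n : ℕ) :
    Set.EqOn (fun x => deriv (laguerreW α m) x * laguerreW α n x)
      (fun x => ∑ k ∈ range (m + 1), ∑ l ∈ range (n + 1),
        laguerreWConst α m * laguerreWConst α n * genLaguerreCoeff α m k * genLaguerreCoeff α n l *
          (deriv (rpowExpHalf (α / 2 + k)) x * rpowExpHalf (α / 2 + l) x)) (Set.Ioi 0) := by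
  intro x hx
  dsimp only
  rw [deriv_laguerreW m hx, laguerreW_eqOn_sum α n hx, mul_mul_mul_comm, sum_mul_sum, mul_sum]
  refine sum_congr rfl fun k _ => ?_
  rw [mul_sum]
  refine sum_congr rfl fun l _ => ?_
  ring

lemma integrableOn_deriv_laguerreW_mul_laguerreW {α : ℝ} (hα : 0 < α) (m n : ℕ) :
    IntegrableOn (fun x => deriv (laguerreW α m) x * laguerreW α n x) (Set.Ioi 0) := by
  refine IntegrableOn.congr_fun ?_ (deriv_laguerreW_mul_laguerreW_eqOn α m n).symm measurableSet_Ioi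
  refine integrable_finsetSum _ fun k _ => integrable_finsetSum _ fun l _ => ?_
  exact (integrableOn_deriv_rpowExpHalf_mul_rpowExpHalf (by positivity)).const_mul _

lemma integral_deriv_laguerreW_mul_laguerreW {α : ℝ} (hα : 0 < α) (m n : ℕ) :
    ∫ x in Set.Ioi 0, deriv (laguerreW α m) x * laguerreW α n x =
      laguerreWConst α m * laguerreWConst α n / 2 * genLaguerreSkewMoment α m n := by
  have hint : ∀ k l : ℕ, IntegrableOn
      (fun x => deriv (rpowExpHalf (α / 2 + k)) x * rpowExpHalf (α / 2 + l) x) (Set.Ioi 0) :=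
    fun k l => integrableOn_deriv_rpowExpHalf_mul_rpowExpHalf (by positivity)
  rw [setIntegral_congr_fun measurableSet_Ioi (deriv_laguerreW_mul_laguerreW_eqOn α m n),
    integral_finsetSum _ fun k _ => integrable_finsetSum _ fun l _ => (hint k l).const_mul _,
    genLaguerreSkewMoment, mul_sum]
  refine sum_congr rfl fun k _ => ?_
  rw [integral_finsetSum _ fun l _ => (hint k l).const_mul _, mul_sum]
  refine sum_congr rfl fun l _ => ?_
  rw [integral_const_mul, integral_deriv_rpowExpHalf_mul_rpowExpHalf (by positivity),
    show α / 2 + k + (α / 2 + l) = α + k + l by ring]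
  ring

lemma Real.sqrt_div_mul_div (a b : ℝ) : √(a / b) * (b / a) = √(b / a) := by
  rw [← inv_div b a, Real.sqrt_inv, inv_mul_eq_div, Real.div_sqrt]

/-- for `α > 1`, the differentiation matrix `D_{m,n} = ∫_0^∞ φₘ′ φₙ` of the
Laguerre W-system is semiseparable of rank one:
`D_{m,n} = −(1/2)𝔞ₘ𝔟ₙ` for `m ≥ n+1`, `0` for `m = n`, `(1/2)𝔞ₙ𝔟ₘ` for `m ≤ n−1`,
where `𝔞ₘ = √(m!/Γ(m+1+α))` and `𝔟ₙ = √(Γ(n+1+α)/n!)`; in particular all these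
integrals converge. -/
theorem laguerreW_differentiationMatrix (α : ℝ) (hα : 1 < α) (m n : ℕ) :
    IntegrableOn (fun x => deriv (laguerreW α m) x * laguerreW α n x) (Set.Ioi 0) ∧
    (n + 1 ≤ m →
      ∫ x in Set.Ioi (0 : ℝ), deriv (laguerreW α m) x * laguerreW α n x
        = -(1 / 2) * Real.sqrt ((m.factorial : ℝ) / Real.Gamma ((m : ℝ) + 1 + α)) *
            Real.sqrt (Real.Gamma ((n : ℝ) + 1 + α) / (n.factorial : ℝ))) ∧
    (m = n →
      ∫ x in Set.Ioi (0 : ℝ), deriv (laguerreW α m) x * laguerreW α n x = 0) ∧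
    (m + 1 ≤ n →
      ∫ x in Set.Ioi (0 : ℝ), deriv (laguerreW α m) x * laguerreW α n x
        = (1 / 2) * Real.sqrt ((n.factorial : ℝ) / Real.Gamma ((n : ℝ) + 1 + α)) *
            Real.sqrt (Real.Gamma ((m : ℝ) + 1 + α) / (m.factorial : ℝ))) := by
  have hα₀ : 0 < α := by linarith
  have hD := integral_deriv_laguerreW_mul_laguerreW hα₀ m n
  refine ⟨integrableOn_deriv_laguerreW_mul_laguerreW hα₀ m n, fun h => ?_, fun h => ?_, fun h => ?_⟩
  · rw [hD, genLaguerreSkewMoment_of_lt hα₀ h, ← Real.sqrt_div_mul_div (n.factorial : ℝ),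
      laguerreWConst, laguerreWConst]
    ring
  · rw [hD, h, genLaguerreSkewMoment_self, mul_zero]
  · rw [hD, genLaguerreSkewMoment_swap α n m, genLaguerreSkewMoment_of_lt hα₀ h,
      ← Real.sqrt_div_mul_div (m.factorial : ℝ), laguerreWConst, laguerreWConst]
    ring
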